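/- arXiv:1408.0448 — 2 statements merged into one kernel-verified Lean document; each statement's English description precedes it below -/
import Mathlib

section
/- Let g be a 2-step nilpotent Lie algebra with abelian complex structure whose center c has real dimension 2 (so c^{1,0} is 1-dimensional), with splitting g^{1,0} = t^{1,0} ⊕ c^{1,0}. Let Λ = Λ₁ + Λ₂ ∈ Λ²g^{1,0} with Λ₁ ∈ c^{1,0} ∧ t^{1,0} and Λ₂ ∈ Λ²t^{1,0}. Then ad_Λ([[Λ, -]] via the Schouten bracket) annihilates all of g^{1,0}, annihilates t^{*(0,1)}, and maps c^{*(0,1)} into t^{*(0,1)} ⊗ g^{1,0}; more precisely ad_{Λ₁}(c^{*(0,1)}) ⊆ t^{*(0,1)} ⊗ c^{1,0} and ad_{Λ₂}(c^{*(0,1)}) ⊆ t^{*(0,1)} ⊗ t^{1,0}. -/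
open TensorProduct

/-!
Since `g^{1,0}` is abelian, `ad_Λ` kills it outright. On `(0,1)`-forms, `L_v ρ̄` only sees the
`c^{0,1}`-component of `ρ̄`, so it vanishes on `t^{*(0,1)}`; and because only `[t^{1,0}, t^{0,1}]`
is nonzero, `L_v ρ̄` vanishes for `v ∈ c^{1,0}` and always vanishes on `c^{0,1}`, i.e. lies in
`t^{*(0,1)}`. Expanding `ad_{W ∧ T}` and `ad_{U ∧ U'}` then gives the two inclusions.
-/

/-- The Lie derivative `[[v, ρ̄]] = L_v ρ̄ = -ι_v dρ̄` of an invariant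
`(0,1)`-form `ρ̄` along `v ∈ g^{1,0}`, computed from the structure constants:
`(L_v ρ̄)(s̄) = -ρ̄( pr_{c^{0,1}} [v, s̄] )`.  Here `g^{1,0} = t^{1,0} ⊕ c^{1,0}`,
`g^{0,1} = t^{0,1} ⊕ c^{0,1}` and `β` is the bracket `[g^{1,0}, g^{0,1}] ⊆ c_ℂ`. -/
noncomputable def lieDer {T10 C10 T01 C01 : Type}
    [AddCommGroup T10] [Module ℂ T10] [AddCommGroup C10] [Module ℂ C10]
    [AddCommGroup T01] [Module ℂ T01] [AddCommGroup C01] [Module ℂ C01]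
    (β : (T10 × C10) →ₗ[ℂ] (T01 × C01) →ₗ[ℂ] (C10 × C01))
    (v : T10 × C10) (ρ : Module.Dual ℂ (T01 × C01)) :
    Module.Dual ℂ (T01 × C01) :=
  -(ρ ∘ₗ (LinearMap.inr ℂ T01 C01) ∘ₗ (LinearMap.snd ℂ C10 C01) ∘ₗ (β v))

section LieDerivative

variable {T10 C10 T01 C01 : Type}
    [AddCommGroup T10] [Module ℂ T10] [AddCommGroup C10] [Module ℂ C10]
    [AddCommGroup T01] [Module ℂ T01] [AddCommGroup C01] [Module ℂ C01]

@[simp]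
theorem lieDer_apply (β : (T10 × C10) →ₗ[ℂ] (T01 × C01) →ₗ[ℂ] (C10 × C01)) (v : T10 × C10)
    (ρ : Module.Dual ℂ (T01 × C01)) (s : T01 × C01) :
    lieDer β v ρ s = -ρ (0, (β v s).2) :=
  rfl

theorem lieDer_eq_zero_of_forall_inr (β : (T10 × C10) →ₗ[ℂ] (T01 × C01) →ₗ[ℂ] (C10 × C01))
    (v : T10 × C10) {ρ : Module.Dual ℂ (T01 × C01)} (hρ : ∀ w : C01, ρ (0, w) = 0) :
    lieDer β v ρ = 0 :=
  LinearMap.ext fun s => by simp [hρ]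

variable {β : (T10 × C10) →ₗ[ℂ] (T01 × C01) →ₗ[ℂ] (C10 × C01)}

theorem lieDer_inr_eq_zero (hβ : ∀ v s, β v s = β (v.1, 0) (s.1, 0)) (W : C10)
    (ρ : Module.Dual ℂ (T01 × C01)) :
    lieDer β (0, W) ρ = 0 :=
  LinearMap.ext fun s => by simp [hβ (0, W) s, Prod.mk_zero_zero]

theorem lieDer_apply_inr_eq_zero (hβ : ∀ v s, β v s = β (v.1, 0) (s.1, 0)) (v : T10 × C10)
    (ρ : Module.Dual ℂ (T01 × C01)) (w : C01) :
    lieDer β v ρ (0, w) = 0 := by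
  simp [hβ v (0, w), Prod.mk_zero_zero]

end LieDerivative

theorem statement13_general (T10 C10 T01 C01 : Type)
    [AddCommGroup T10] [Module ℂ T10] [AddCommGroup C10] [Module ℂ C10]
    [AddCommGroup T01] [Module ℂ T01] [AddCommGroup C01] [Module ℂ C01]
    -- the bracket [g^{1,0}, g^{0,1}] ⊆ c^{1,0} ⊕ c^{0,1}; only [t^{1,0}, t^{0,1}]
    -- is nonzero
    (β : (T10 × C10) →ₗ[ℂ] (T01 × C01) →ₗ[ℂ] (C10 × C01))
    (hβ : ∀ (v : T10 × C10) (s : T01 × C01), β v s = β (v.1, 0) (s.1, 0))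
    -- the bracket of g^{1,0} with itself vanishes (abelian complex structure)
    (γ : (T10 × C10) →ₗ[ℂ] (T10 × C10) →ₗ[ℂ] (T10 × C10))
    (hγ : ∀ v w, γ v w = 0)
    -- the Poisson bivector Λ = Λ₁ + Λ₂, Λ₁ = W ∧ T, Λ₂ = Σ_i U_i ∧ U'_i
    (W : C10) (T : T10) (N : ℕ) (U U' : Fin N → T10) :
    -- (i) ad_Λ annihilates g^{1,0}:  [[Λ, v]] = 0 (computed via the
    -- biderivation formula from the trivial bracket γ of g^{1,0})
    (∀ v : T10 × C10,
      (((0 : T10), W) ⊗ₜ[ℂ] (γ (T, (0 : C10)) v) - (T, (0 : C10)) ⊗ₜ[ℂ] (γ ((0 : T10), W) v))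
      + ∑ i, ((U i, (0 : C10)) ⊗ₜ[ℂ] (γ (U' i, (0 : C10)) v)
          - (U' i, (0 : C10)) ⊗ₜ[ℂ] (γ (U i, (0 : C10)) v)) = 0) ∧
    -- (ii) ad_Λ annihilates t^{*(0,1)}
    (∀ ρ : Module.Dual ℂ (T01 × C01), (∀ w : C01, ρ (0, w) = 0) →
      ((lieDer β (T, (0 : C10)) ρ) ⊗ₜ[ℂ] (((0 : T10), W) : T10 × C10)
        - (lieDer β ((0 : T10), W) ρ) ⊗ₜ[ℂ] ((T, (0 : C10)) : T10 × C10))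
      + ∑ i, ((lieDer β (U i, (0 : C10)) ρ) ⊗ₜ[ℂ] ((U' i, (0 : C10)) : T10 × C10)
          - (lieDer β (U' i, (0 : C10)) ρ) ⊗ₜ[ℂ] ((U i, (0 : C10)) : T10 × C10)) = 0) ∧
    -- (iii) ad_{Λ₁}(c^{*(0,1)}) ⊆ t^{*(0,1)} ⊗ c^{1,0}
    (∀ ρ : Module.Dual ℂ (T01 × C01), (∀ s : T01, ρ (s, 0) = 0) →
      ((lieDer β (T, (0 : C10)) ρ) ⊗ₜ[ℂ] (((0 : T10), W) : T10 × C10)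
        - (lieDer β ((0 : T10), W) ρ) ⊗ₜ[ℂ] ((T, (0 : C10)) : T10 × C10))
      ∈ Submodule.span ℂ {x | ∃ (α : Module.Dual ℂ (T01 × C01)) (w : C10),
          (∀ u : C01, α (0, u) = 0) ∧ x = α ⊗ₜ[ℂ] (((0 : T10), w) : T10 × C10)}) ∧
    -- (iv) ad_{Λ₂}(c^{*(0,1)}) ⊆ t^{*(0,1)} ⊗ t^{1,0}
    (∀ ρ : Module.Dual ℂ (T01 × C01), (∀ s : T01, ρ (s, 0) = 0) →
      (∑ i, ((lieDer β (U i, (0 : C10)) ρ) ⊗ₜ[ℂ] ((U' i, (0 : C10)) : T10 × C10)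
          - (lieDer β (U' i, (0 : C10)) ρ) ⊗ₜ[ℂ] ((U i, (0 : C10)) : T10 × C10)))
      ∈ Submodule.span ℂ {x | ∃ (α : Module.Dual ℂ (T01 × C01)) (u : T10),
          (∀ w : C01, α (0, w) = 0) ∧ x = α ⊗ₜ[ℂ] ((u, (0 : C10)) : T10 × C10)}) := by
  refine ⟨fun v => by simp [hγ], fun ρ hρ => ?_, fun ρ _ => ?_, fun ρ _ => ?_⟩
  · simp [lieDer_eq_zero_of_forall_inr β _ hρ]
  · rw [lieDer_inr_eq_zero hβ, zero_tmul, sub_zero]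
    exact Submodule.subset_span ⟨_, W, lieDer_apply_inr_eq_zero hβ _ ρ, rfl⟩
  · refine Submodule.sum_mem _ fun i _ => Submodule.sub_mem _ ?_ ?_ <;>
      exact Submodule.subset_span ⟨_, _, lieDer_apply_inr_eq_zero hβ _ ρ, rfl⟩

/-- Let `g` be 2-step nilpotent with abelian complex structure,
center `c` of real dimension 2 (so `c^{1,0}` is 1-dimensional), and splitting
`g^{1,0} = t^{1,0} ⊕ c^{1,0}`.  Let `Λ = Λ₁ + Λ₂` with `Λ₁ = W ∧ T ∈ c^{1,0} ∧ t^{1,0}`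
and `Λ₂ = Σ_i U_i ∧ U'_i ∈ Λ²t^{1,0}`.  Then `ad_Λ = [[Λ, -]]` annihilates
`g^{1,0}` (since `g^{1,0}` is abelian) and `t^{*(0,1)}`, while
`ad_{Λ₁}(c^{*(0,1)}) ⊆ t^{*(0,1)} ⊗ c^{1,0}` and
`ad_{Λ₂}(c^{*(0,1)}) ⊆ t^{*(0,1)} ⊗ t^{1,0}`. -/
theorem statement13 (T10 C10 T01 C01 : Type)
    [AddCommGroup T10] [Module ℂ T10] [AddCommGroup C10] [Module ℂ C10]
    [AddCommGroup T01] [Module ℂ T01] [AddCommGroup C01] [Module ℂ C01]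
    [FiniteDimensional ℂ T10] [FiniteDimensional ℂ C10]
    [FiniteDimensional ℂ T01] [FiniteDimensional ℂ C01]
    -- the center c^{1,0} is one-dimensional
    (hdim : Module.finrank ℂ C10 = 1)
    -- the bracket [g^{1,0}, g^{0,1}] ⊆ c^{1,0} ⊕ c^{0,1}; only [t^{1,0}, t^{0,1}]
    -- is nonzero
    (β : (T10 × C10) →ₗ[ℂ] (T01 × C01) →ₗ[ℂ] (C10 × C01))
    (hβ : ∀ (v : T10 × C10) (s : T01 × C01), β v s = β (v.1, 0) (s.1, 0))
    -- the bracket of g^{1,0} with itself vanishes (abelian complex structure)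
    (γ : (T10 × C10) →ₗ[ℂ] (T10 × C10) →ₗ[ℂ] (T10 × C10))
    (hγ : ∀ v w, γ v w = 0)
    -- the Poisson bivector Λ = Λ₁ + Λ₂, Λ₁ = W ∧ T, Λ₂ = Σ_i U_i ∧ U'_i
    (W : C10) (T : T10) (N : ℕ) (U U' : Fin N → T10) :
    -- (i) ad_Λ annihilates g^{1,0}:  [[Λ, v]] = 0 (computed via the
    -- biderivation formula from the trivial bracket γ of g^{1,0})
    (∀ v : T10 × C10,
      (((0 : T10), W) ⊗ₜ[ℂ] (γ (T, (0 : C10)) v) - (T, (0 : C10)) ⊗ₜ[ℂ] (γ ((0 : T10), W) v))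
      + ∑ i, ((U i, (0 : C10)) ⊗ₜ[ℂ] (γ (U' i, (0 : C10)) v)
          - (U' i, (0 : C10)) ⊗ₜ[ℂ] (γ (U i, (0 : C10)) v)) = 0) ∧
    -- (ii) ad_Λ annihilates t^{*(0,1)}
    (∀ ρ : Module.Dual ℂ (T01 × C01), (∀ w : C01, ρ (0, w) = 0) →
      ((lieDer β (T, (0 : C10)) ρ) ⊗ₜ[ℂ] (((0 : T10), W) : T10 × C10)
        - (lieDer β ((0 : T10), W) ρ) ⊗ₜ[ℂ] ((T, (0 : C10)) : T10 × C10))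
      + ∑ i, ((lieDer β (U i, (0 : C10)) ρ) ⊗ₜ[ℂ] ((U' i, (0 : C10)) : T10 × C10)
          - (lieDer β (U' i, (0 : C10)) ρ) ⊗ₜ[ℂ] ((U i, (0 : C10)) : T10 × C10)) = 0) ∧
    -- (iii) ad_{Λ₁}(c^{*(0,1)}) ⊆ t^{*(0,1)} ⊗ c^{1,0}
    (∀ ρ : Module.Dual ℂ (T01 × C01), (∀ s : T01, ρ (s, 0) = 0) →
      ((lieDer β (T, (0 : C10)) ρ) ⊗ₜ[ℂ] (((0 : T10), W) : T10 × C10)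
        - (lieDer β ((0 : T10), W) ρ) ⊗ₜ[ℂ] ((T, (0 : C10)) : T10 × C10))
      ∈ Submodule.span ℂ {x | ∃ (α : Module.Dual ℂ (T01 × C01)) (w : C10),
          (∀ u : C01, α (0, u) = 0) ∧ x = α ⊗ₜ[ℂ] (((0 : T10), w) : T10 × C10)}) ∧
    -- (iv) ad_{Λ₂}(c^{*(0,1)}) ⊆ t^{*(0,1)} ⊗ t^{1,0}
    (∀ ρ : Module.Dual ℂ (T01 × C01), (∀ s : T01, ρ (s, 0) = 0) →
      (∑ i, ((lieDer β (U i, (0 : C10)) ρ) ⊗ₜ[ℂ] ((U' i, (0 : C10)) : T10 × C10)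
          - (lieDer β (U' i, (0 : C10)) ρ) ⊗ₜ[ℂ] ((U i, (0 : C10)) : T10 × C10)))
      ∈ Submodule.span ℂ {x | ∃ (α : Module.Dual ℂ (T01 × C01)) (u : T10),
          (∀ w : C01, α (0, w) = 0) ∧ x = α ⊗ₜ[ℂ] ((u, (0 : C10)) : T10 × C10)}) :=
  statement13_general T10 C10 T01 C01 β hβ γ hγ W T N U U'
end

section
/- In the setting of a 2-step nilmanifold with abelian complex structure and 2-dimensional center, with invariant Poisson bivector Λ = Λ₁ + Λ₂ as above, the differential d₂ of the Poisson spectral sequence vanishes identically: for every class A ∈ Λ^q(g^{*(0,1)}) ⊗ Λ^p g^{1,0} with ∂̄A = 0 and ad_Λ A = ∂̄B for some B, the element ad_Λ B is ∂̄-exact (in fact ad_Λ B = 0 for a suitable choice of B). -/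
/-!
Write `b` for the `c^{*(0,b)}`-degree of a component. `∂̄` preserves `b`, while `ad_{Λ₁}` and
`ad_{Λ₂}` lower it by one and kill `b = 0`; since `b ≤ 1` everywhere, `ad_Λ` lands in `b = 0`.
Split `B = B₀ + B₁` into its parts with `b = 0` and `b ≠ 0`. Then `∂̄B₁ = ad_Λ x - ∂̄B₀` has
`b = 0` and `b ≠ 0` at once, so it vanishes: `B₀` still solves `ad_Λ x = ∂̄B₀`, and
`ad_Λ B₀ = 0`.
-/

open Set Submodule

theorem Submodule.biSup_preimage_le_comap {R M ι κ : Type*} [Ring R] [AddCommGroup M]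
    [Module R M] {S : ι → Submodule R M} {w : ι → κ} {f : M →ₗ[R] M}
    (hf : ∀ i, S i ≤ (⨆ j ∈ w ⁻¹' {w i}, S j).comap f) (T : Set κ) :
    ⨆ i ∈ w ⁻¹' T, S i ≤ (⨆ i ∈ w ⁻¹' T, S i).comap f :=
  iSup₂_le fun i hi => (hf i).trans <| comap_mono <| biSup_mono fun j hj => by
    simp_all only [mem_preimage, mem_singleton_iff]

namespace InvariantComplex

variable {R V : Type*} [Ring R] [AddCommGroup V] [Module R V]
  (C : ℕ → ℕ → ℕ → ℕ → Submodule R V)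

def component (i : ℕ × ℕ × ℕ × ℕ) : Submodule R V := C i.1 i.2.1 i.2.2.1 i.2.2.2

def centralDegreePart (T : Set ℕ) : Submodule R V :=
  ⨆ i ∈ (fun i : ℕ × ℕ × ℕ × ℕ => i.2.1) ⁻¹' T, component C i

variable {C}

theorem component_le_centralDegreePart {a b k l : ℕ} {T : Set ℕ} (hb : b ∈ T) :
    C a b k l ≤ centralDegreePart C T :=
  le_biSup (component C) (i := (a, b, k, l)) hb

theorem disjoint_centralDegreePart (hC : iSupIndep (component C)) {T T' : Set ℕ}
    (hT : Disjoint T T') : Disjoint (centralDegreePart C T) (centralDegreePart C T') :=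
  hC.disjoint_biSup_biSup (hT.preimage _)

theorem centralDegreePart_le_comap_dbar {db : V →ₗ[R] V}
    (hdb : ∀ a b k l, (C a b (k+1) l).map db ≤ C (a+1) b k (l+1))
    (hdb0 : ∀ a b l, (C a b 0 l).map db = ⊥) (T : Set ℕ) :
    centralDegreePart C T ≤ (centralDegreePart C T).comap db := by
  refine biSup_preimage_le_comap (fun ⟨a, b, k, l⟩ => map_le_iff_le_comap.mp ?_) T
  rcases k with - | k
  · exact (hdb0 a b l).trans_le bot_le
  · exact (hdb a b k l).trans (component_le_centralDegreePart rfl)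

theorem apply_mem_centralDegreePart_zero (hC : iSup (component C) = ⊤)
    (hvan : ∀ a b k l, 2 ≤ b → C a b k l = ⊥) {f : V →ₗ[R] V}
    (hf : ∀ a k l, (C a 1 k l).map f ≤ centralDegreePart C {0})
    (hf0 : ∀ a k l, (C a 0 k l).map f = ⊥) (v : V) :
    f v ∈ centralDegreePart C {0} := by
  suffices h : iSup (component C) ≤ (centralDegreePart C {0}).comap f from h (hC ▸ mem_top)
  refine iSup_le fun ⟨a, b, k, l⟩ => map_le_iff_le_comap.mp ?_
  match b with
  | 0 => exact (hf0 a k l).trans_le bot_le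
  | 1 => exact hf a k l
  | b + 2 => simp [component, hvan a (b + 2) k l le_add_self]

theorem apply_eq_zero_of_mem_centralDegreePart_zero {f : V →ₗ[R] V}
    (hf0 : ∀ a k l, (C a 0 k l).map f = ⊥) {v : V} (hv : v ∈ centralDegreePart C {0}) :
    f v = 0 := by
  suffices h : centralDegreePart C {0} ≤ (⊥ : Submodule R V).comap f from h hv
  refine iSup₂_le ?_
  rintro ⟨a, b, k, l⟩ (rfl : b = 0)
  exact map_le_iff_le_comap.mp (hf0 a k l).le

end InvariantComplex

open InvariantComplex

theorem statement14_general (V : Type) [AddCommGroup V] [Module ℂ V]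
    (C : ℕ → ℕ → ℕ → ℕ → Submodule ℂ V)
    -- the components give a direct sum decomposition of V
    (hinternal : DirectSum.IsInternal
      (fun i : ℕ × ℕ × ℕ × ℕ => C i.1 i.2.1 i.2.2.1 i.2.2.2))
    -- c^{1,0} is one-dimensional: components with b ≥ 2 or ℓ ≥ 2 vanish
    (hvan : ∀ a b k l, 2 ≤ b ∨ 2 ≤ l → C a b k l = ⊥)
    -- the operators ∂̄, ad_{Λ₁}, ad_{Λ₂}
    (db A1 A2 : V →ₗ[ℂ] V)
    (hdb : ∀ a b k l, (C a b (k+1) l).map db ≤ C (a+1) b k (l+1))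
    (hdb0 : ∀ a b l, (C a b 0 l).map db = ⊥)
    (hA1 : ∀ a b k l, (C a (b+1) k l).map A1 ≤ C (a+1) b k (l+1))
    (hA10 : ∀ a k l, (C a 0 k l).map A1 = ⊥)
    (hA2 : ∀ a b k l, (C a (b+1) k l).map A2 ≤ C (a+1) b (k+1) l)
    (hA20 : ∀ a k l, (C a 0 k l).map A2 = ⊥) :
    -- d₂ ≡ 0:
    ∀ p q : ℕ, ∀ x : V,
      x ∈ (⨆ (a : ℕ) (b : ℕ) (k : ℕ) (l : ℕ)
            (_ : a + b = q + 1 ∧ k + l = p), C a b k l) →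
      db x = 0 →
      ∀ B : V,
        B ∈ (⨆ (a : ℕ) (b : ℕ) (k : ℕ) (l : ℕ)
              (_ : a + b = q ∧ k + l = p + 1), C a b k l) →
        A1 x + A2 x = db B →
        ∃ B' : V,
          B' ∈ (⨆ (a : ℕ) (b : ℕ) (k : ℕ) (l : ℕ)
                (_ : a + b = q ∧ k + l = p + 1), C a b k l) ∧
          A1 x + A2 x = db B' ∧ A1 B' + A2 B' = 0 := by
  intro p q x _ _ B hB hxB
  set E := {i : ℕ × ℕ × ℕ × ℕ | i.1 + i.2.1 = q ∧ i.2.2.1 + i.2.2.2 = p + 1}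
  have hE : (⨆ (a : ℕ) (b : ℕ) (k : ℕ) (l : ℕ) (_ : a + b = q ∧ k + l = p + 1), C a b k l)
      = ⨆ i ∈ E, component C i := by
    simp only [iSup_prod]; rfl
  rw [hE] at hB ⊢
  let Z := (fun i : ℕ × ℕ × ℕ × ℕ => i.2.1) ⁻¹' {0}
  rw [← inter_union_sdiff E Z, iSup_union] at hB
  obtain ⟨B₀, hB₀', B₁, hB₁, rfl⟩ := mem_sup.mp hB
  have hB₀ : B₀ ∈ centralDegreePart C {0} :=
    iSup_le_iSup_of_subset (f := component C) inter_subset_right hB₀'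
  replace hB₁ : B₁ ∈ centralDegreePart C {0}ᶜ :=
    iSup_le_iSup_of_subset (f := component C) (sdiff_subset_compl E Z) hB₁
  have htop := hinternal.submodule_iSup_eq_top
  have hvan' a b k l (hb : 2 ≤ b) := hvan a b k l (Or.inl hb)
  have hadx : A1 x + A2 x ∈ centralDegreePart C {0} := add_mem
    (apply_mem_centralDegreePart_zero htop hvan'
      (fun a k l => (hA1 a 0 k l).trans (component_le_centralDegreePart rfl)) hA10 x)
    (apply_mem_centralDegreePart_zero htop hvan'
      (fun a k l => (hA2 a 0 k l).trans (component_le_centralDegreePart rfl)) hA20 x)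
  have hdbB₀ := centralDegreePart_le_comap_dbar hdb hdb0 _ hB₀
  have hdbB₁ : db B₁ = 0 :=
    disjoint_def.mp (disjoint_centralDegreePart hinternal.submodule_iSupIndep
      disjoint_compl_right) _ (by simpa [hxB] using sub_mem hadx hdbB₀)
      (centralDegreePart_le_comap_dbar hdb hdb0 _ hB₁)
  refine ⟨B₀, iSup_le_iSup_of_subset (f := component C) inter_subset_left hB₀', ?_, ?_⟩
  · rw [hxB, map_add, hdbB₁, add_zero]
  · rw [apply_eq_zero_of_mem_centralDegreePart_zero hA10 hB₀,
      apply_eq_zero_of_mem_centralDegreePart_zero hA20 hB₀, add_zero]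

/-- Setting of Theorem 2 of the paper: a 2-step nilmanifold with
abelian complex structure and 2-dimensional center, with invariant holomorphic
Poisson bivector `Λ = Λ₁ + Λ₂`.  The invariant complex `V` decomposes into
components `C a b k ℓ` standing for `t^{*(0,a)} ⊗ c^{*(0,b)} ⊗ t^{k,0} ⊗ c^{ℓ,0}`
(vanishing when `b ≥ 2` or `ℓ ≥ 2` as `c^{1,0}` is one-dimensional); `∂̄` maps
`(a,b;k,ℓ)` into `(a+1,b;k-1,ℓ+1)`, `ad_{Λ₁}` maps `(a,b;k,ℓ)` into
`(a+1,b-1;k,ℓ+1)` and `ad_{Λ₂}` maps `(a,b;k,ℓ)` into `(a+1,b-1;k+1,ℓ)`.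
Then `d₂` of the Poisson spectral sequence vanishes identically: whenever
`x` has bidegree `(p,q)`, `∂̄x = 0`, and `ad_Λ x = ∂̄B` for some `B` of bidegree
`(p+1,q-1)`, there is a choice `B'` with `ad_Λ x = ∂̄B'` and `ad_Λ B' = 0`. -/
theorem statement14 (V : Type) [AddCommGroup V] [Module ℂ V]
    (C : ℕ → ℕ → ℕ → ℕ → Submodule ℂ V)
    -- the components give a direct sum decomposition of V
    (hinternal : DirectSum.IsInternal
      (fun i : ℕ × ℕ × ℕ × ℕ => C i.1 i.2.1 i.2.2.1 i.2.2.2))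
    -- c^{1,0} is one-dimensional: components with b ≥ 2 or ℓ ≥ 2 vanish
    (hvan : ∀ a b k l, 2 ≤ b ∨ 2 ≤ l → C a b k l = ⊥)
    -- the operators ∂̄, ad_{Λ₁}, ad_{Λ₂}
    (db A1 A2 : V →ₗ[ℂ] V)
    (hdb : ∀ a b k l, (C a b (k+1) l).map db ≤ C (a+1) b k (l+1))
    (hdb0 : ∀ a b l, (C a b 0 l).map db = ⊥)
    (hA1 : ∀ a b k l, (C a (b+1) k l).map A1 ≤ C (a+1) b k (l+1))
    (hA10 : ∀ a k l, (C a 0 k l).map A1 = ⊥)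
    (hA2 : ∀ a b k l, (C a (b+1) k l).map A2 ≤ C (a+1) b (k+1) l)
    (hA20 : ∀ a k l, (C a 0 k l).map A2 = ⊥)
    -- double complex identities for ∂̄ and ad_Λ = ad_{Λ₁} + ad_{Λ₂}
    (hdbdb : ∀ x : V, db (db x) = 0)
    (hadad : ∀ x : V, A1 (A1 x) + A1 (A2 x) + A2 (A1 x) + A2 (A2 x) = 0)
    (hanti : ∀ x : V, db (A1 x) + db (A2 x) + A1 (db x) + A2 (db x) = 0) :
    -- d₂ ≡ 0:
    ∀ p q : ℕ, ∀ x : V,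
      x ∈ (⨆ (a : ℕ) (b : ℕ) (k : ℕ) (l : ℕ)
            (_ : a + b = q + 1 ∧ k + l = p), C a b k l) →
      db x = 0 →
      ∀ B : V,
        B ∈ (⨆ (a : ℕ) (b : ℕ) (k : ℕ) (l : ℕ)
              (_ : a + b = q ∧ k + l = p + 1), C a b k l) →
        A1 x + A2 x = db B →
        ∃ B' : V,
          B' ∈ (⨆ (a : ℕ) (b : ℕ) (k : ℕ) (l : ℕ)
                (_ : a + b = q ∧ k + l = p + 1), C a b k l) ∧
          A1 x + A2 x = db B' ∧ A1 B' + A2 B' = 0 :=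
  statement14_general V C hinternal hvan db A1 A2 hdb hdb0 hA1 hA10 hA2 hA20
end
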